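/- Let k ≥ 1, let 𝒫 be a centered prior with unit variance and bounded support, and let ν(f) = E⟨f⟩ be the averaged Gibbs measure of the rank-k spiked Gaussian Wigner model. Let p ≥ 1 be an integer and suppose there exists a constant C ≥ 1 such that ν((R_{1,*}(m,s))^{2j}) ≤ C/N^j for all 0 ≤ j ≤ p and all 1 ≤ m,s ≤ k. Then there is a constant C'(p), depending only on p, C and the bound of 𝒫, such that ν((R⁻_{1,*}(m,s))^{2p}) ≤ C'(p)/N^p for all 1 ≤ m,s ≤ k. -/

import Mathlib

open MeasureTheory ProbabilityTheory Filter Topology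

noncomputable section

instance matrixMeasurableSpace {m n α : Type*} [MeasurableSpace α] :
    MeasurableSpace (Matrix m n α) :=
  inferInstanceAs (MeasurableSpace (m → n → α))

/-- An `N × N` symmetric random matrix is a (real) Wigner matrix with parameters
`w2, w3, w4`: independent entries on and above the diagonal, all moments finite,
centered, off-diagonal second/third/fourth moments `1/N`, `w3/N^(3/2)`, `w4/N^2`,
and diagonal variance `w2/N`. -/
def IsWigner {Ω : Type} [MeasurableSpace Ω] (P : Measure Ω) (N : ℕ)
    (H : Ω → Matrix (Fin N) (Fin N) ℝ) (w2 w3 w4 : ℝ) : Prop :=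
  (∀ ω, (H ω).IsSymm) ∧
  (∀ i j : Fin N, Measurable fun ω => H ω i j) ∧
  iIndepFun
    (fun (p : {q : Fin N × Fin N // q.1 ≤ q.2}) ω => H ω p.1.1 p.1.2) P ∧
  (∀ i j : Fin N, i ≤ j → ∀ p : ℕ, Integrable (fun ω => |H ω i j| ^ p) P) ∧
  (∀ i j : Fin N, i ≤ j → ∫ ω, H ω i j ∂P = 0) ∧
  (∀ i j : Fin N, i < j → (N : ℝ) * ∫ ω, (H ω i j) ^ 2 ∂P = 1) ∧
  (∀ i j : Fin N, i < j → (N : ℝ) ^ ((3 : ℝ)/2) * ∫ ω, (H ω i j) ^ 3 ∂P = w3) ∧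
  (∀ i j : Fin N, i < j → (N : ℝ) ^ 2 * ∫ ω, (H ω i j) ^ 4 ∂P = w4) ∧
  (∀ i : Fin N, (N : ℝ) * ∫ ω, (H ω i i) ^ 2 ∂P = w2)

/-- A rank-`k` spiked Wigner matrix `M = √λ X Xᵀ + H` with deterministic spike `X`
having unit-norm columns. -/
def IsSpikedWigner {Ω : Type} [MeasurableSpace Ω] (P : Measure Ω) (N k : ℕ)
    (M : Ω → Matrix (Fin N) (Fin N) ℝ) (lam w2 w3 w4 : ℝ) : Prop :=
  ∃ (X : Matrix (Fin N) (Fin k) ℝ) (H : Ω → Matrix (Fin N) (Fin N) ℝ),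
    (∀ i : Fin k, ∑ j : Fin N, (X j i) ^ 2 = 1) ∧
    IsWigner P N H w2 w3 w4 ∧
    (∀ ω, M ω = Real.sqrt lam • (X * X.transpose) + H ω)

/-- The LSS-based test statistic `L_λ`. -/
def Lstat (N : ℕ) (lam w2 w4 : ℝ) (M : Matrix (Fin N) (Fin N) ℝ) : ℝ :=
  -Real.log (((1 + lam) • (1 : Matrix (Fin N) (Fin N) ℝ) - Real.sqrt lam • M).det)
    + lam * N / 2
    + Real.sqrt lam * (2 / w2 - 1) * M.trace
    + lam * (1 / (w4 - 1) - 1 / 2) * ((M * M).trace - N)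

/-- Limiting mean `m_k` of `L_λ` for a rank-`k` spiked Wigner matrix. -/
def mval (k : ℕ) (lam w2 w4 : ℝ) : ℝ :=
  -(1 / 2) * Real.log (1 - lam) + ((w2 - 1) / (w4 - 1) - 1 / 2) * lam
    + (w4 - 3) * lam ^ 2 / 4
    + k * (-Real.log (1 - lam) + (2 / w2 - 1) * lam + (1 / (w4 - 1) - 1 / 2) * lam ^ 2)

/-- Limiting variance `V_0` of `L_λ`. -/
def Vval (lam w2 w4 : ℝ) : ℝ :=
  -2 * Real.log (1 - lam) + (4 / w2 - 2) * lam + (2 / (w4 - 1) - 1) * lam ^ 2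

/-- Convergence in distribution of real random variables, via bounded continuous
test functions. -/
def TendstoInDistribution {Ω : ℕ → Type} [∀ n, MeasurableSpace (Ω n)]
    (P : ∀ n, Measure (Ω n)) (L : ∀ n, Ω n → ℝ) (μ : Measure ℝ) : Prop :=
  ∀ g : ℝ → ℝ, Continuous g → (∃ C, ∀ x, |g x| ≤ C) →
    Tendsto (fun n => ∫ ω, g (L n ω) ∂(P n)) atTop (𝓝 (∫ x, g x ∂μ))

/-- The complementary error function. -/
def erfc (x : ℝ) : ℝ := 2 / Real.sqrt Real.pi * ∫ t in Set.Ioi x, Real.exp (-t ^ 2)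

/-- Assumptions on a noise density: smooth, positive, symmetric, with `h = -g'/g`
and all its derivatives polynomially bounded. -/
def NiceDensity (g : ℝ → ℝ) : Prop :=
  ContDiff ℝ (⊤ : ℕ∞) g ∧ (∀ x, 0 < g x) ∧ (∀ x, g (-x) = g x) ∧
  ∀ ℓ : ℕ, ∃ C : ℝ, ∀ w : ℝ,
    |iteratedDeriv ℓ (fun x => -(deriv g x) / g x) w| ≤ C * |w| ^ C

/-- The Fisher information `F^H` of the density `g`. -/
def FH (g : ℝ → ℝ) : ℝ := ∫ w : ℝ, (deriv g w) ^ 2 / g w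

/-- The quantity `G^H` of the density `g`. -/
def GH (g : ℝ → ℝ) : ℝ :=
  1 / (2 * FH g) * ∫ w : ℝ, (deriv g w) ^ 2 * deriv (deriv g) w / (g w) ^ 2

/-- The quantity `w̃_4` of the density `g`. -/
def wt4 (g : ℝ → ℝ) : ℝ := 1 / (FH g) ^ 2 * ∫ w : ℝ, (deriv g w) ^ 4 / (g w) ^ 3

/-- The entrywise transformed matrix `M̃`. -/
def transMat (N : ℕ) (w2 : ℝ) (g gd : ℝ → ℝ) (M : Matrix (Fin N) (Fin N) ℝ) :
    Matrix (Fin N) (Fin N) ℝ :=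
  Matrix.of fun i j =>
    if i = j then
      Real.sqrt (w2 / (FH gd * N)) *
        (-(deriv gd (Real.sqrt (N / w2) * M i i)) / gd (Real.sqrt (N / w2) * M i i))
    else
      (-(deriv g (Real.sqrt N * M i j)) / g (Real.sqrt N * M i j)) / Real.sqrt (FH g * N)

/-- The transformed test statistic `L̃_λ`. -/
def LstatTrans (N : ℕ) (lam w2 : ℝ) (g gd : ℝ → ℝ) (M : Matrix (Fin N) (Fin N) ℝ) : ℝ :=
  -Real.log (((1 + lam * FH g) • (1 : Matrix (Fin N) (Fin N) ℝ)
      - Real.sqrt (lam * FH g) • transMat N w2 g gd M).det)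
    + lam * FH g * N / 2
    + Real.sqrt lam * (2 * Real.sqrt (FH gd) / w2 - Real.sqrt (FH g)) * (transMat N w2 g gd M).trace
    + lam * (GH g / (wt4 g - 1) - FH g / 2) * ((transMat N w2 g gd M * transMat N w2 g gd M).trace - N)

/-- Limiting mean `m̃_k` of `L̃_λ`. -/
def mtval (k : ℕ) (lam w2 : ℝ) (g gd : ℝ → ℝ) : ℝ :=
  -(1 / 2) * Real.log (1 - lam * FH g)
    + ((w2 - 1) * GH g / (wt4 g - 1) - FH g / 2) * lam
    + (wt4 g - 3) / 4 * (lam * FH g) ^ 2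
    + k * (-Real.log (1 - lam * FH g) + (2 * FH gd / w2 - FH g) * lam
        + ((GH g) ^ 2 / (wt4 g - 1) - (FH g) ^ 2 / 2) * lam ^ 2)

/-- Limiting variance `Ṽ_0` of `L̃_λ`. -/
def Vtval (lam w2 : ℝ) (g gd : ℝ → ℝ) : ℝ :=
  -2 * Real.log (1 - lam * FH g) + (4 * FH gd / w2 - 2 * FH g) * lam
    + (2 * (GH g) ^ 2 / (wt4 g - 1) - (FH g) ^ 2) * lam ^ 2

/-- A rank-`k` spiked Wigner matrix satisfying the entrywise-transformation
assumptions: delocalized spike and noise entries with densities `g`, `gd`. -/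
def IsSpikedWignerTrans {Ω : Type} [MeasurableSpace Ω] (P : Measure Ω) (N k : ℕ)
    (M : Ω → Matrix (Fin N) (Fin N) ℝ) (lam w2 w3 w4 c : ℝ) (g gd : ℝ → ℝ) : Prop :=
  ∃ (X : Matrix (Fin N) (Fin k) ℝ) (H : Ω → Matrix (Fin N) (Fin N) ℝ),
    (∀ i : Fin k, ∑ j : Fin N, (X j i) ^ 2 = 1) ∧
    (∀ i : Fin k, ∀ j : Fin N, |X j i| ≤ (N : ℝ) ^ (-c)) ∧
    IsWigner P N H w2 w3 w4 ∧
    (∀ i j : Fin N, i ≠ j →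
      P.map (fun ω => Real.sqrt N * H ω i j)
        = (volume : Measure ℝ).withDensity fun x => ENNReal.ofReal (g x)) ∧
    (∀ i : Fin N,
      P.map (fun ω => Real.sqrt N * H ω i i)
        = (volume : Measure ℝ).withDensity fun x => ENNReal.ofReal (gd x)) ∧
    (∀ ω, M ω = Real.sqrt lam • (X * X.transpose) + H ω)

/-- `τ_ℓ(f) = (1/π) ∫_{-2}^2 T_ℓ(x/2) f(x)/√(4-x²) dx`. -/
def tauC (ℓ : ℕ) (f : ℝ → ℝ) : ℝ :=
  (1 / Real.pi) *
    ∫ x in (-2 : ℝ)..2, (Polynomial.Chebyshev.T ℝ (ℓ : ℤ)).eval (x / 2) * f x / Real.sqrt (4 - x ^ 2)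

/-- Limiting mean `m_k(f)` of the LSS of a rank-`k` spiked Wigner matrix. -/
def mLSS (k : ℕ) (lam w2 w4 : ℝ) (f : ℝ → ℝ) : ℝ :=
  (1 / 4) * (f 2 + f (-2)) - (1 / 2) * tauC 0 f + (w2 - 2) * tauC 2 f
    + (w4 - 3) * tauC 4 f
    + k * ∑' ℓ : ℕ, Real.sqrt (lam ^ (ℓ + 1)) * tauC (ℓ + 1) f

/-- Limiting variance `V_0(f)` of the LSS. -/
def VLSS (w2 w4 : ℝ) (f : ℝ → ℝ) : ℝ :=
  (w2 - 2) * (tauC 1 f) ^ 2 + 2 * (w4 - 3) * (tauC 2 f) ^ 2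
    + 2 * ∑' ℓ : ℕ, ((ℓ : ℝ) + 1) * (tauC (ℓ + 1) f) ^ 2

/-- Limiting mean `m̃_k(f)` of the LSS of the transformed matrix. -/
def mLSSt (k : ℕ) (lam w2 : ℝ) (g gd : ℝ → ℝ) (f : ℝ → ℝ) : ℝ :=
  (1 / 4) * (f 2 + f (-2)) - (1 / 2) * tauC 0 f
    + k * Real.sqrt (lam * FH gd) * tauC 1 f
    + (w2 - 2 + k * lam * GH g) * tauC 2 f
    + (wt4 g - 3) * tauC 4 f
    + k * ∑' ℓ : ℕ, Real.sqrt ((lam * FH g) ^ (ℓ + 3)) * tauC (ℓ + 3) f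

/-- Limiting variance `Ṽ_0(f)` of the LSS of the transformed matrix. -/
def VLSSt (w2 : ℝ) (g : ℝ → ℝ) (f : ℝ → ℝ) : ℝ :=
  (w2 - 2) * (tauC 1 f) ^ 2 + 2 * (wt4 g - 3) * (tauC 2 f) ^ 2
    + 2 * ∑' ℓ : ℕ, ((ℓ : ℝ) + 1) * (tauC (ℓ + 1) f) ^ 2

/-- The optimal LSS function `φ_λ`. -/
def phiLam (lam w2 w4 : ℝ) (x : ℝ) : ℝ :=
  Real.log (1 / (1 - Real.sqrt lam * x + lam)) + Real.sqrt lam * (2 / w2 - 1) * x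
    + lam * (1 / (w4 - 1) - 1 / 2) * x ^ 2

/-- The optimal LSS function `φ̃_λ` for the transformed matrix. -/
def phiLamT (lam w2 : ℝ) (g gd : ℝ → ℝ) (x : ℝ) : ℝ :=
  Real.log (1 / (1 - Real.sqrt (lam * FH g) * x + lam * FH g))
    + Real.sqrt lam * (2 * Real.sqrt (FH gd) / w2 - Real.sqrt (FH g)) * x
    + lam * (GH g / (wt4 g - 1) - FH g / 2) * x ^ 2

/-! ### The spiked Gaussian Wigner model, Hamiltonians and Gibbs measures -/

/-- The negative Hamiltonian `-H^k(X)` of the rank-`k` spiked Gaussian Wigner model. -/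
def negHam (N k : ℕ) (lam w2 : ℝ) (Y : Matrix (Fin N) (Fin N) ℝ)
    (X : Fin N → Fin k → ℝ) : ℝ :=
  (∑ i : Fin N, ∑ j : Fin N, if i < j then
      ∑ n : Fin k, (Real.sqrt (lam / N) * Y i j * X i n * X j n
        - lam / (2 * N) * X i n * X j n * ∑ m : Fin k, X i m * X j m)
    else 0)
  + (1 / w2) * ∑ i : Fin N, ∑ n : Fin k,
      (Real.sqrt (lam / N) * Y i i * (X i n) ^ 2
        - lam / (2 * N) * (X i n) ^ 2 * ∑ m : Fin k, (X i m) ^ 2)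

/-- The product prior measure `𝒫₀^{⊗N}` on configurations. -/
def cfgM (N k : ℕ) (prior : Measure ℝ) : Measure (Fin N → Fin k → ℝ) :=
  Measure.pi fun _ => Measure.pi fun _ => prior

/-- The partition function `ℒ(Y; k) = ∫ e^{-H^k(X)} d𝒫₀^{⊗N}(X)`. -/
def partition (N k : ℕ) (lam w2 : ℝ) (prior : Measure ℝ)
    (Y : Matrix (Fin N) (Fin N) ℝ) : ℝ :=
  ∫ X, Real.exp (negHam N k lam w2 Y X) ∂(cfgM N k prior)

/-- Gaussian noise `W` (symmetric, independent entries, variance `1` off-diagonal,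
`w2` on the diagonal) together with a spike `X*` with i.i.d. entries of law `prior`,
all jointly independent. -/
def IsGaussianNoiseSpike {Ω : Type} [MeasurableSpace Ω] (P : Measure Ω) (N k : ℕ) (w2 : ℝ)
    (prior : Measure ℝ) (W : Ω → Matrix (Fin N) (Fin N) ℝ)
    (XS : Ω → Fin N → Fin k → ℝ) : Prop :=
  (∀ ω, (W ω).IsSymm) ∧
  (∀ i j : Fin N, Measurable fun ω => W ω i j) ∧
  (∀ i : Fin N, ∀ l : Fin k, Measurable fun ω => XS ω i l) ∧
  iIndepFun
    (fun (p : {q : Fin N × Fin N // q.1 ≤ q.2} ⊕ (Fin N × Fin k)) ω =>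
      Sum.elim (fun q : {q : Fin N × Fin N // q.1 ≤ q.2} => W ω q.1.1 q.1.2)
        (fun q : Fin N × Fin k => XS ω q.1 q.2) p) P ∧
  (∀ i j : Fin N, i < j → P.map (fun ω => W ω i j) = gaussianReal 0 1) ∧
  (∀ i : Fin N, P.map (fun ω => W ω i i) = gaussianReal 0 (Real.toNNReal w2)) ∧
  (∀ i : Fin N, ∀ l : Fin k, P.map (fun ω => XS ω i l) = prior)

/-- The rank-`k` spiked Gaussian Wigner model `Y = √(λ/N) X* X*ᵀ + W`, with the spike
`XS` exposed. -/
def IsGaussianSpikeModel {Ω : Type} [MeasurableSpace Ω] (P : Measure Ω) (N k : ℕ)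
    (lam w2 : ℝ) (prior : Measure ℝ) (Y : Ω → Matrix (Fin N) (Fin N) ℝ)
    (XS : Ω → Fin N → Fin k → ℝ) : Prop :=
  ∃ W : Ω → Matrix (Fin N) (Fin N) ℝ,
    IsGaussianNoiseSpike P N k w2 prior W XS ∧
    ∀ ω, Y ω = Real.sqrt (lam / N) • (Matrix.of (XS ω) * (Matrix.of (XS ω)).transpose) + W ω

/-- The rank-`k` spiked Gaussian Wigner model (spike existentially quantified). -/
def IsSpikedGaussianWigner {Ω : Type} [MeasurableSpace Ω] (P : Measure Ω) (N k : ℕ)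
    (lam w2 : ℝ) (prior : Measure ℝ) (Y : Ω → Matrix (Fin N) (Fin N) ℝ) : Prop :=
  ∃ XS : Ω → Fin N → Fin k → ℝ, IsGaussianSpikeModel P N k lam w2 prior Y XS

/-- The Gibbs average `⟨f⟩` of a function of one replica and the spike. -/
def gibbs (N k : ℕ) (lam w2 : ℝ) (prior : Measure ℝ) (Y : Matrix (Fin N) (Fin N) ℝ)
    (XS : Fin N → Fin k → ℝ)
    (f : (Fin N → Fin k → ℝ) → (Fin N → Fin k → ℝ) → ℝ) : ℝ :=
  (∫ X, f X XS * Real.exp (negHam N k lam w2 Y X) ∂(cfgM N k prior))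
    / ∫ X, Real.exp (negHam N k lam w2 Y X) ∂(cfgM N k prior)

/-- `ν(f) = E⟨f⟩`: expectation over the randomness of the model of the Gibbs average. -/
def nuE {Ω : Type} [MeasurableSpace Ω] (P : Measure Ω) (N k : ℕ) (lam w2 : ℝ)
    (prior : Measure ℝ) (Y : Ω → Matrix (Fin N) (Fin N) ℝ)
    (XS : Ω → Fin N → Fin k → ℝ)
    (f : (Fin N → Fin k → ℝ) → (Fin N → Fin k → ℝ) → ℝ) : ℝ :=
  ∫ ω, gibbs N k lam w2 prior (Y ω) (XS ω) f ∂P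

/-- The overlap `R_{1,*}(m,s)` between a replica `X` and the spike `XS`. -/
def Rov (N k : ℕ) (m s : Fin k) (X XS : Fin N → Fin k → ℝ) : ℝ :=
  (∑ i : Fin N, X i m * XS i s) / N

/-- The truncated overlap `R⁻_{1,*}(m,s)` (omitting the last coordinate). -/
def RovM (N k : ℕ) (m s : Fin k) (X XS : Fin N → Fin k → ℝ) : ℝ :=
  (∑ i : Fin N, if (i : ℕ) + 1 < N then X i m * XS i s else 0) / N

/-- The dot product of the `i`-th row of `A` and the `j`-th row of `B`. -/
def rowdot (N k : ℕ) (A B : Fin N → Fin k → ℝ) (i j : Fin N) : ℝ :=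
  ∑ m : Fin k, A i m * B j m

/-- The interpolating negative Hamiltonian `-H^k_t(X)` (cavity at the last coordinate). -/
def negHamT (n k : ℕ) (lam w2 t : ℝ) (W : Matrix (Fin (n + 1)) (Fin (n + 1)) ℝ)
    (XS X : Fin (n + 1) → Fin k → ℝ) : ℝ :=
  (∑ i : Fin (n + 1), ∑ j : Fin (n + 1),
    if i < j ∧ (j : ℕ) < n then
      Real.sqrt (lam / (n + 1)) * W i j * rowdot (n + 1) k X X i j
        + lam / (n + 1) * rowdot (n + 1) k X X i j * rowdot (n + 1) k XS XS i j
        - lam / (2 * (n + 1)) * (rowdot (n + 1) k X X i j) ^ 2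
    else 0)
  + (1 / w2) * ∑ i : Fin (n + 1),
      (if (i : ℕ) < n then
        Real.sqrt (lam / (n + 1)) * W i i * rowdot (n + 1) k X X i i
          + lam / (n + 1) * rowdot (n + 1) k X X i i * rowdot (n + 1) k XS XS i i
          - lam / (2 * (n + 1)) * (rowdot (n + 1) k X X i i) ^ 2
      else 0)
  + (∑ i : Fin (n + 1),
      if (i : ℕ) < n then
        Real.sqrt (lam * t / (n + 1)) * W i (Fin.last n) * rowdot (n + 1) k X X i (Fin.last n)
          + lam * t / (n + 1) * rowdot (n + 1) k X X i (Fin.last n)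
              * rowdot (n + 1) k XS XS i (Fin.last n)
          - lam * t / (2 * (n + 1)) * (rowdot (n + 1) k X X i (Fin.last n)) ^ 2
      else 0)
  + (1 / w2) * (Real.sqrt (lam * t / (n + 1)) * W (Fin.last n) (Fin.last n)
        * rowdot (n + 1) k X X (Fin.last n) (Fin.last n)
      + lam * t / (n + 1) * rowdot (n + 1) k X X (Fin.last n) (Fin.last n)
          * rowdot (n + 1) k XS XS (Fin.last n) (Fin.last n)
      - lam * t / (2 * (n + 1)) * (rowdot (n + 1) k X X (Fin.last n) (Fin.last n)) ^ 2)

/-- The Gibbs average `⟨f⟩_t` of a function of `nR` replicas and the spike, with respect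
to the interpolating Hamiltonian `H^k_t`. -/
def gibbsT (n k nR : ℕ) (lam w2 t : ℝ) (prior : Measure ℝ)
    (W : Matrix (Fin (n + 1)) (Fin (n + 1)) ℝ) (XS : Fin (n + 1) → Fin k → ℝ)
    (f : (Fin nR → Fin (n + 1) → Fin k → ℝ) → (Fin (n + 1) → Fin k → ℝ) → ℝ) : ℝ :=
  (∫ Xr : Fin nR → Fin (n + 1) → Fin k → ℝ,
      f Xr XS * Real.exp (∑ l : Fin nR, negHamT n k lam w2 t W XS (Xr l))
      ∂(Measure.pi fun _ : Fin nR => cfgM (n + 1) k prior))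
    / (∫ X, Real.exp (negHamT n k lam w2 t W XS X) ∂(cfgM (n + 1) k prior)) ^ nR

/-- `ν_t(f) = E⟨f⟩_t`. -/
def nuT {Ω : Type} [MeasurableSpace Ω] (P : Measure Ω) (n k nR : ℕ) (lam w2 t : ℝ)
    (prior : Measure ℝ) (W : Ω → Matrix (Fin (n + 1)) (Fin (n + 1)) ℝ)
    (XS : Ω → Fin (n + 1) → Fin k → ℝ)
    (f : (Fin nR → Fin (n + 1) → Fin k → ℝ) → (Fin (n + 1) → Fin k → ℝ) → ℝ) : ℝ :=
  ∫ ω, gibbsT n k nR lam w2 t prior (W ω) (XS ω) f ∂P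


/-- `μ(k₁,k₂) = ((k₁-k₂)²/4)(-log(1-λ) + (2/w₂-1)λ)`. -/
def muval (k1 k2 : ℕ) (lam w2 : ℝ) : ℝ :=
  ((k1 : ℝ) - k2) ^ 2 / 4 * (-Real.log (1 - lam) + (2 / w2 - 1) * lam)

end

/-! ### Auxiliary lemmas for Statement 14 -/

section Aux14

open MeasureTheory

lemma add_pow_le'' (x y : ℝ) (hx : 0 ≤ x) (hy : 0 ≤ y) (n : ℕ) :
    (x + y) ^ n ≤ 2 ^ n * (x ^ n + y ^ n) := by
  calc (x + y) ^ n ≤ (2 * max x y) ^ n := by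
        apply pow_le_pow_left₀ (by positivity)
        rcases max_cases x y with ⟨h1, h2⟩ | ⟨h1, h2⟩ <;> rw [h1] <;> linarith
    _ = 2 ^ n * (max x y) ^ n := mul_pow 2 _ n
    _ ≤ 2 ^ n * (x ^ n + y ^ n) := by
        apply mul_le_mul_of_nonneg_left _ (by positivity)
        rcases max_cases x y with ⟨h1, h2⟩ | ⟨h1, h2⟩ <;> rw [h1]
        · nlinarith [pow_nonneg hy n]
        · nlinarith [pow_nonneg hx n]

lemma overlap_bound14 (N k : ℕ) (hN : 1 ≤ N) (m s : Fin k) (B : ℝ) (hB0 : 0 ≤ B)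
    (X XSv : Fin N → Fin k → ℝ)
    (hX : ∀ i l, |X i l| ≤ B) (hXS : ∀ i l, |XSv i l| ≤ B) (p : ℕ) :
    |Rov N k m s X XSv| ≤ B ^ 2 ∧ |RovM N k m s X XSv| ≤ 2 * B ^ 2 ∧
    RovM N k m s X XSv ^ (2 * p)
      ≤ 2 ^ (2 * p) * Rov N k m s X XSv ^ (2 * p)
        + 2 ^ (2 * p) * (B ^ (4 * p) / (N : ℝ) ^ (2 * p)) := by
  have hNpos : (0 : ℝ) < N := by exact_mod_cast hN
  set g : Fin N → ℝ := fun i => X i m * XSv i s with hg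
  have hgb : ∀ i, |g i| ≤ B ^ 2 := fun i => by
    rw [hg, abs_mul, sq]
    exact mul_le_mul (hX i m) (hXS i s) (abs_nonneg _) hB0
  have hlast : N - 1 < N := by omega
  set lastI : Fin N := ⟨N - 1, hlast⟩ with hlastI
  have hsum : (∑ i : Fin N, if (i : ℕ) + 1 < N then g i else 0)
      = (∑ i : Fin N, g i) - g lastI := by
    have hcond : ∀ i : Fin N, ((i : ℕ) + 1 < N ↔ i ≠ lastI) := by
      intro i
      constructor
      · intro h hEq; rw [hEq] at h; simp [hlastI] at h; omega
      · intro h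
        have hi := i.isLt
        have : (i : ℕ) ≠ N - 1 := fun hc => h (Fin.ext (by simp [hlastI, hc]))
        omega
    calc (∑ i : Fin N, if (i : ℕ) + 1 < N then g i else 0)
        = ∑ i : Fin N, if i ≠ lastI then g i else 0 :=
          Finset.sum_congr rfl fun i _ => if_congr (hcond i) rfl rfl
      _ = ∑ i ∈ Finset.univ.filter (· ≠ lastI), g i := (Finset.sum_filter _ _).symm
      _ = ∑ i ∈ Finset.univ.erase lastI, g i := by rw [Finset.filter_ne']
      _ = (∑ i : Fin N, g i) - g lastI :=
          Finset.sum_erase_eq_sub (Finset.mem_univ _)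
  have hRovAbs : |Rov N k m s X XSv| ≤ B ^ 2 := by
    rw [Rov, abs_div, abs_of_pos hNpos, div_le_iff₀ hNpos]
    calc |∑ i : Fin N, g i| ≤ ∑ i : Fin N, |g i| := Finset.abs_sum_le_sum_abs _ _
      _ ≤ ∑ _i : Fin N, B ^ 2 := Finset.sum_le_sum fun i _ => hgb i
      _ = N * B ^ 2 := by simp [mul_comm]
      _ = B ^ 2 * N := by ring
  have hRM : RovM N k m s X XSv = Rov N k m s X XSv - g lastI / N := by
    rw [RovM, Rov, hsum, sub_div]
  have hRMabs : |RovM N k m s X XSv| ≤ |Rov N k m s X XSv| + B ^ 2 / N := by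
    rw [hRM]
    refine (abs_sub _ _).trans ?_
    gcongr
    rw [abs_div, abs_of_pos hNpos]
    gcongr
    exact hgb lastI
  refine ⟨hRovAbs, ?_, ?_⟩
  · refine hRMabs.trans ?_
    have : B ^ 2 / (N : ℝ) ≤ B ^ 2 := by
      have hN1 : (1 : ℝ) ≤ N := by exact_mod_cast hN
      rw [div_le_iff₀ hNpos]; nlinarith [sq_nonneg B]
    linarith
  · have hev : Even (2 * p) := even_two_mul p
    have h1 : RovM N k m s X XSv ^ (2 * p) = |RovM N k m s X XSv| ^ (2 * p) :=
      (hev.pow_abs _).symm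
    have h2 : |RovM N k m s X XSv| ^ (2 * p)
        ≤ (|Rov N k m s X XSv| + B ^ 2 / N) ^ (2 * p) :=
      pow_le_pow_left₀ (abs_nonneg _) hRMabs _
    have h3 : (|Rov N k m s X XSv| + B ^ 2 / N) ^ (2 * p)
        ≤ 2 ^ (2 * p) * (|Rov N k m s X XSv| ^ (2 * p) + (B ^ 2 / N) ^ (2 * p)) :=
      add_pow_le'' _ _ (abs_nonneg _) (by positivity) _
    have h4 : (B ^ 2 / (N : ℝ)) ^ (2 * p) = B ^ (4 * p) / (N : ℝ) ^ (2 * p) := by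
      rw [div_pow, ← pow_mul]
      congr 2
      omega
    have h5 : |Rov N k m s X XSv| ^ (2 * p) = Rov N k m s X XSv ^ (2 * p) :=
      hev.pow_abs _
    rw [h1]
    calc |RovM N k m s X XSv| ^ (2 * p)
        ≤ 2 ^ (2 * p) * (|Rov N k m s X XSv| ^ (2 * p) + (B ^ 2 / N) ^ (2 * p)) :=
          h2.trans h3
      _ = 2 ^ (2 * p) * Rov N k m s X XSv ^ (2 * p)
          + 2 ^ (2 * p) * (B ^ (4 * p) / (N : ℝ) ^ (2 * p)) := by
          rw [h4, h5]; ring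

lemma ratio_facts14 {α : Type*} [MeasurableSpace α] (μ : Measure α)
    (f₁ f₂ e : α → ℝ) (a c M : ℝ) (hc : 0 ≤ c) (hM : 0 ≤ M)
    (he0 : ∀ x, 0 ≤ e x)
    (hf₁0 : ∀ᵐ x ∂μ, 0 ≤ f₁ x) (hf₂0 : ∀ᵐ x ∂μ, 0 ≤ f₂ x)
    (hle : ∀ᵐ x ∂μ, f₁ x ≤ a * f₂ x + c) (hbd : ∀ᵐ x ∂μ, f₂ x ≤ M)
    (hi1 : Integrable (fun x => f₁ x * e x) μ)
    (hi2 : Integrable (fun x => f₂ x * e x) μ)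
    (hie : Integrable e μ) :
    0 ≤ (∫ x, f₁ x * e x ∂μ) / (∫ x, e x ∂μ) ∧
    (∫ x, f₁ x * e x ∂μ) / (∫ x, e x ∂μ)
      ≤ a * ((∫ x, f₂ x * e x ∂μ) / (∫ x, e x ∂μ)) + c ∧
    0 ≤ (∫ x, f₂ x * e x ∂μ) / (∫ x, e x ∂μ) ∧
    (∫ x, f₂ x * e x ∂μ) / (∫ x, e x ∂μ) ≤ M := by
  have hI0 : 0 ≤ ∫ x, e x ∂μ := integral_nonneg he0
  have hJ10 : 0 ≤ ∫ x, f₁ x * e x ∂μ := by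
    apply integral_nonneg_of_ae
    filter_upwards [hf₁0] with x hx using mul_nonneg hx (he0 x)
  have hJ20 : 0 ≤ ∫ x, f₂ x * e x ∂μ := by
    apply integral_nonneg_of_ae
    filter_upwards [hf₂0] with x hx using mul_nonneg hx (he0 x)
  rcases eq_or_lt_of_le hI0 with hI | hI
  · rw [← hI, div_zero, div_zero]
    exact ⟨le_rfl, by nlinarith, le_rfl, hM⟩
  · have h2 : ∫ x, f₂ x * e x ∂μ ≤ M * ∫ x, e x ∂μ := by
      rw [← integral_const_mul]
      apply integral_mono_ae hi2 (hie.const_mul M)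
      filter_upwards [hbd] with x hx using mul_le_mul_of_nonneg_right hx (he0 x)
    have h1 : ∫ x, f₁ x * e x ∂μ
        ≤ a * (∫ x, f₂ x * e x ∂μ) + c * ∫ x, e x ∂μ := by
      rw [← integral_const_mul, ← integral_const_mul, ← integral_add
        (hi2.const_mul a) (hie.const_mul c)]
      apply integral_mono_ae hi1 ((hi2.const_mul a).add (hie.const_mul c))
      filter_upwards [hle] with x hx
      have := mul_le_mul_of_nonneg_right hx (he0 x)
      simp only [Pi.add_apply]; nlinarith [he0 x]
    refine ⟨div_nonneg hJ10 hI0, ?_, div_nonneg hJ20 hI0, ?_⟩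
    · rw [div_le_iff₀ hI]
      calc ∫ x, f₁ x * e x ∂μ ≤ a * (∫ x, f₂ x * e x ∂μ) + c * ∫ x, e x ∂μ := h1
        _ = (a * ((∫ x, f₂ x * e x ∂μ) / (∫ x, e x ∂μ)) + c) * ∫ x, e x ∂μ := by
            field_simp
    · rw [div_le_iff₀ hI]; linarith

@[fun_prop]
lemma cont_negHam14 (N k : ℕ) (lam w2 : ℝ) :
    Continuous fun a : (Fin N → Fin N → ℝ) × (Fin N → Fin k → ℝ) =>
      negHam N k lam w2 a.1 a.2 := by
  unfold negHam
  apply Continuous.add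
  · apply continuous_finset_sum; intro i _
    apply continuous_finset_sum; intro j _
    by_cases h : i < j
    · simp only [if_pos h]; fun_prop
    · simp only [if_neg h]; fun_prop
  · fun_prop

@[fun_prop]
lemma cont_Rov14 (N k : ℕ) (m s : Fin k) :
    Continuous fun q : (Fin N → Fin k → ℝ) × (Fin N → Fin k → ℝ) =>
      Rov N k m s q.1 q.2 := by
  unfold Rov; fun_prop

@[fun_prop]
lemma cont_RovM14 (N k : ℕ) (m s : Fin k) :
    Continuous fun q : (Fin N → Fin k → ℝ) × (Fin N → Fin k → ℝ) =>
      RovM N k m s q.1 q.2 := by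
  unfold RovM
  apply Continuous.div_const
  apply continuous_finset_sum; intro i _
  by_cases h : (i : ℕ) + 1 < N
  · simp only [if_pos h]; fun_prop
  · simp only [if_neg h]; exact continuous_const

set_option maxHeartbeats 1000000 in
lemma gibbs_meas14 {Ω : Type} [MeasurableSpace Ω] (N k : ℕ) (lam w2 : ℝ)
    (prior : Measure ℝ) [IsProbabilityMeasure prior]
    {Y : Ω → Matrix (Fin N) (Fin N) ℝ} {XS : Ω → Fin N → Fin k → ℝ}
    (hY : Measurable Y) (hXS : Measurable XS)
    (f : (Fin N → Fin k → ℝ) → (Fin N → Fin k → ℝ) → ℝ)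
    (hf : Continuous fun q : (Fin N → Fin k → ℝ) × (Fin N → Fin k → ℝ) => f q.1 q.2) :
    Measurable fun ω => gibbs N k lam w2 prior (Y ω) (XS ω) f := by
  haveI : IsProbabilityMeasure (cfgM N k prior) := by
    unfold cfgM; infer_instance
  have hcontd : Continuous fun a :
      ((Fin N → Fin N → ℝ) × (Fin N → Fin k → ℝ)) × (Fin N → Fin k → ℝ) =>
      Real.exp (negHam N k lam w2 a.1.1 a.2) := by fun_prop
  have hcont : Continuous fun a :
      ((Fin N → Fin N → ℝ) × (Fin N → Fin k → ℝ)) × (Fin N → Fin k → ℝ) =>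
      f a.2 a.1.2 * Real.exp (negHam N k lam w2 a.1.1 a.2) := by
    apply Continuous.mul
    · exact hf.comp (continuous_snd.prodMk continuous_fst.snd)
    · exact hcontd
  have hnum : StronglyMeasurable fun x : (Fin N → Fin N → ℝ) × (Fin N → Fin k → ℝ) =>
      ∫ X, f X x.2 * Real.exp (negHam N k lam w2 x.1 X) ∂(cfgM N k prior) :=
    hcont.stronglyMeasurable.integral_prod_right'
  have hden : StronglyMeasurable fun x : (Fin N → Fin N → ℝ) × (Fin N → Fin k → ℝ) =>
      ∫ X, Real.exp (negHam N k lam w2 x.1 X) ∂(cfgM N k prior) :=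
    hcontd.stronglyMeasurable.integral_prod_right'
  have hp : Measurable fun ω => ((Y ω : Fin N → Fin N → ℝ), XS ω) := hY.prodMk hXS
  have hd := (hnum.measurable.comp hp).div (hden.measurable.comp hp)
  unfold gibbs
  exact hd

set_option maxHeartbeats 1000000 in
lemma gibbs_facts14 (N k : ℕ) (hN : 1 ≤ N) (lam w2 : ℝ)
    (prior : Measure ℝ) [IsProbabilityMeasure prior]
    (B : ℝ) (hB0 : 0 ≤ B) (hBae : ∀ᵐ x ∂prior, |x| ≤ B)
    (p : ℕ) (m s : Fin k) (Y : Matrix (Fin N) (Fin N) ℝ)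
    (XSv : Fin N → Fin k → ℝ) (hXSv : ∀ i l, |XSv i l| ≤ B) :
    0 ≤ gibbs N k lam w2 prior Y XSv (fun X Xs => RovM N k m s X Xs ^ (2 * p)) ∧
    gibbs N k lam w2 prior Y XSv (fun X Xs => RovM N k m s X Xs ^ (2 * p))
      ≤ 2 ^ (2 * p) * gibbs N k lam w2 prior Y XSv
            (fun X Xs => Rov N k m s X Xs ^ (2 * p))
        + 2 ^ (2 * p) * (B ^ (4 * p) / (N : ℝ) ^ (2 * p)) ∧
    0 ≤ gibbs N k lam w2 prior Y XSv (fun X Xs => Rov N k m s X Xs ^ (2 * p)) ∧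
    gibbs N k lam w2 prior Y XSv (fun X Xs => Rov N k m s X Xs ^ (2 * p))
      ≤ B ^ (4 * p) := by
  haveI : IsProbabilityMeasure (cfgM N k prior) := by
    unfold cfgM; infer_instance
  have hIccM : MeasurableSet (Set.Icc (-B) B) := measurableSet_Icc
  have hprior1 : prior (Set.Icc (-B) B) = 1 := by
    rw [← prob_compl_eq_zero_iff hIccM]
    have habs_eq : {x : ℝ | ¬ |x| ≤ B} = (Set.Icc (-B) B)ᶜ := by
      ext x; simp [abs_le]
    rw [← habs_eq]
    exact ae_iff.mp hBae
  set S : Set (Fin N → Fin k → ℝ) :=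
    Set.univ.pi fun _ => Set.univ.pi fun _ => Set.Icc (-B) B with hSdef
  have hSm : MeasurableSet S :=
    MeasurableSet.univ_pi fun _ => MeasurableSet.univ_pi fun _ => hIccM
  have hμS : (cfgM N k prior) S = 1 := by
    have hinner : (Measure.pi fun _ : Fin k => prior)
        (Set.univ.pi fun _ => Set.Icc (-B) B) = 1 := by
      rw [Measure.pi_pi]
      rw [Finset.prod_congr rfl fun _ _ => hprior1]
      simp
    unfold cfgM
    rw [hSdef, Measure.pi_pi]
    rw [Finset.prod_congr rfl fun _ _ => hinner]
    simp
  have hae : ∀ᵐ X ∂(cfgM N k prior), X ∈ S := by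
    rw [ae_iff]
    have hset : {X | ¬ X ∈ S} = Sᶜ := rfl
    rw [hset]
    exact (prob_compl_eq_zero_iff hSm).mpr hμS
  have hSbd : ∀ X ∈ S, ∀ i l, |X i l| ≤ B := by
    intro X hX i l
    rw [hSdef, Set.mem_univ_pi] at hX
    have := hX i
    rw [Set.mem_univ_pi] at this
    exact abs_le.mpr (this l)
  set e : (Fin N → Fin k → ℝ) → ℝ := fun X => Real.exp (negHam N k lam w2 Y X)
    with hedef
  have hce : Continuous e := by
    rw [hedef]; fun_prop
  have hScomp : IsCompact S := by
    rw [hSdef]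
    exact isCompact_univ_pi fun _ => isCompact_univ_pi fun _ => isCompact_Icc
  obtain ⟨K, hK⟩ := hScomp.exists_bound_of_continuousOn hce.continuousOn
  have he0 : ∀ X, 0 ≤ e X := fun X => (Real.exp_pos _).le
  have hie : Integrable e (cfgM N k prior) := by
    apply Integrable.mono' (integrable_const K) hce.aestronglyMeasurable
    filter_upwards [hae] with X hX using hK X hX
  set f₂ : (Fin N → Fin k → ℝ) → ℝ := fun X => Rov N k m s X XSv ^ (2 * p)
    with hf₂def
  set f₁ : (Fin N → Fin k → ℝ) → ℝ := fun X => RovM N k m s X XSv ^ (2 * p)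
    with hf₁def
  have hc2 : Continuous f₂ := by
    rw [hf₂def]; fun_prop
  have hc1 : Continuous f₁ := by
    rw [hf₁def]; fun_prop
  have hKe : ∀ᵐ X ∂(cfgM N k prior), ‖e X‖ ≤ K := by
    filter_upwards [hae] with X hX using hK X hX
  have hev : Even (2 * p) := even_two_mul p
  have hf2bd : ∀ᵐ X ∂(cfgM N k prior), f₂ X ≤ B ^ (4 * p) := by
    filter_upwards [hae] with X hX
    obtain ⟨h1, -, -⟩ := overlap_bound14 N k hN m s B hB0 X XSv (hSbd X hX) hXSv p
    rw [hf₂def]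
    calc Rov N k m s X XSv ^ (2 * p) = |Rov N k m s X XSv| ^ (2 * p) :=
          (hev.pow_abs _).symm
      _ ≤ (B ^ 2) ^ (2 * p) := pow_le_pow_left₀ (abs_nonneg _) h1 _
      _ = B ^ (4 * p) := by rw [← pow_mul]; congr 1; omega
  have hf1bd : ∀ᵐ X ∂(cfgM N k prior), f₁ X ≤ (2 * B ^ 2) ^ (2 * p) := by
    filter_upwards [hae] with X hX
    obtain ⟨-, h1, -⟩ := overlap_bound14 N k hN m s B hB0 X XSv (hSbd X hX) hXSv p
    rw [hf₁def]
    calc RovM N k m s X XSv ^ (2 * p) = |RovM N k m s X XSv| ^ (2 * p) :=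
          (hev.pow_abs _).symm
      _ ≤ (2 * B ^ 2) ^ (2 * p) := pow_le_pow_left₀ (abs_nonneg _) h1 _
  have hi2 : Integrable (fun X => f₂ X * e X) (cfgM N k prior) := by
    apply Integrable.mono' (integrable_const (B ^ (4 * p) * K))
      (hc2.mul hce).aestronglyMeasurable
    filter_upwards [hf2bd, hKe] with X h1 h2
    have h0 : 0 ≤ f₂ X := hev.pow_nonneg _
    have hKnn : 0 ≤ K := le_trans (norm_nonneg _) h2
    rw [Real.norm_eq_abs, Pi.mul_apply, abs_mul, abs_of_nonneg h0, abs_of_nonneg (he0 X)]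
    have := Real.norm_eq_abs (e X) ▸ h2
    calc f₂ X * e X ≤ B ^ (4 * p) * e X :=
          mul_le_mul_of_nonneg_right h1 (he0 X)
      _ ≤ B ^ (4 * p) * K := by
          apply mul_le_mul_of_nonneg_left _ (by positivity)
          calc e X ≤ |e X| := le_abs_self _
            _ ≤ K := this
  have hi1 : Integrable (fun X => f₁ X * e X) (cfgM N k prior) := by
    apply Integrable.mono' (integrable_const ((2 * B ^ 2) ^ (2 * p) * K))
      (hc1.mul hce).aestronglyMeasurable
    filter_upwards [hf1bd, hKe] with X h1 h2
    have h0 : 0 ≤ f₁ X := hev.pow_nonneg _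
    rw [Real.norm_eq_abs, Pi.mul_apply, abs_mul, abs_of_nonneg h0, abs_of_nonneg (he0 X)]
    have h2' : e X ≤ K := (le_abs_self _).trans (Real.norm_eq_abs (e X) ▸ h2)
    calc f₁ X * e X ≤ (2 * B ^ 2) ^ (2 * p) * e X :=
          mul_le_mul_of_nonneg_right h1 (he0 X)
      _ ≤ (2 * B ^ 2) ^ (2 * p) * K := by
          apply mul_le_mul_of_nonneg_left h2' (by positivity)
  have hle : ∀ᵐ X ∂(cfgM N k prior),
      f₁ X ≤ 2 ^ (2 * p) * f₂ X + 2 ^ (2 * p) * (B ^ (4 * p) / (N : ℝ) ^ (2 * p)) := by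
    filter_upwards [hae] with X hX
    obtain ⟨-, -, h3⟩ := overlap_bound14 N k hN m s B hB0 X XSv (hSbd X hX) hXSv p
    exact h3
  have hf₁0 : ∀ᵐ X ∂(cfgM N k prior), 0 ≤ f₁ X :=
    Filter.Eventually.of_forall fun X => hev.pow_nonneg _
  have hf₂0 : ∀ᵐ X ∂(cfgM N k prior), 0 ≤ f₂ X :=
    Filter.Eventually.of_forall fun X => hev.pow_nonneg _
  have key := ratio_facts14 (cfgM N k prior) f₁ f₂ e (2 ^ (2 * p))
    (2 ^ (2 * p) * (B ^ (4 * p) / (N : ℝ) ^ (2 * p))) (B ^ (4 * p))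
    (by positivity) (by positivity) he0 hf₁0 hf₂0 hle hf2bd hi1 hi2 hie
  unfold gibbs
  exact key

end Aux14

/-- If the even moments of the overlap satisfy
`ν(R_{1,*}(m,s)^{2j}) ≤ C/N^j` for all `j ≤ p`, then the truncated overlap satisfies
`ν((R⁻_{1,*}(m,s))^{2p}) ≤ C'(p)/N^p`, with `C'` depending only on `p`, `C` and
the bound of the prior. -/
theorem truncated_overlap_moment_bound
    (k : ℕ) (hk : 1 ≤ k)
    (prior : Measure ℝ) [IsProbabilityMeasure prior]
    (B : ℝ) (hB : ∀ᵐ x ∂prior, |x| ≤ B)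
    (hmean : ∫ x, x ∂prior = 0) (hvar : ∫ x, x ^ 2 ∂prior = 1)
    (p : ℕ) (hp : 1 ≤ p) (C : ℝ) (hC : 1 ≤ C) :
    ∃ C' : ℝ, ∀ (lam w2 : ℝ) (N : ℕ) (Ω : Type) (_ : MeasurableSpace Ω)
      (P : Measure Ω) (_ : IsProbabilityMeasure P)
      (Y : Ω → Matrix (Fin N) (Fin N) ℝ) (XS : Ω → Fin N → Fin k → ℝ),
      IsGaussianSpikeModel P N k lam w2 prior Y XS →
      (∀ j : ℕ, j ≤ p → ∀ m s : Fin k,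
        nuE P N k lam w2 prior Y XS (fun X XSv => Rov N k m s X XSv ^ (2 * j))
          ≤ C / (N : ℝ) ^ j) →
      ∀ m s : Fin k,
        nuE P N k lam w2 prior Y XS (fun X XSv => RovM N k m s X XSv ^ (2 * p))
          ≤ C' / (N : ℝ) ^ p := by
  have hB0 : 0 ≤ B := by
    obtain ⟨x, hx⟩ := hB.exists
    exact (abs_nonneg x).trans hx
  refine ⟨(2 : ℝ) ^ (2 * p) * C + (2 : ℝ) ^ (2 * p) * B ^ (4 * p), ?_⟩
  intro lam w2 N Ω mΩ P hP Y XS hmodel hmom m s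
  obtain ⟨W, hnoise, hYdef⟩ := hmodel
  obtain ⟨hWsymm, hWm, hXSm, hindep, hWoff, hWdiag, hXSlaw⟩ := hnoise
  rcases Nat.eq_zero_or_pos N with hN0 | hNpos
  · subst hN0
    have hfun : (fun X XSv : Fin 0 → Fin k → ℝ => RovM 0 k m s X XSv ^ (2 * p))
        = fun _ _ => (0 : ℝ) := by
      funext X XSv
      have h2p : 2 * p ≠ 0 := by omega
      simp [RovM, h2p]
    have hzero : nuE P 0 k lam w2 prior Y XS
        (fun X XSv => RovM 0 k m s X XSv ^ (2 * p)) = 0 := by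
      rw [nuE, hfun]
      simp [gibbs]
    rw [hzero, Nat.cast_zero, zero_pow (by omega : p ≠ 0), div_zero]
  · -- main case
    have hN1 : 1 ≤ N := hNpos
    have hNR1 : (1 : ℝ) ≤ N := by exact_mod_cast hN1
    have hNRpos : (0 : ℝ) < N := by linarith
    -- measurability of XS and Y
    have hXSmeas : Measurable XS :=
      measurable_pi_lambda _ fun i => measurable_pi_lambda _ fun l => hXSm i l
    have hYmeas : Measurable Y := by
      have hYeq : Y = fun ω => Real.sqrt (lam / N)
          • (Matrix.of (XS ω) * (Matrix.of (XS ω)).transpose) + W ω := funext hYdef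
      rw [hYeq]
      apply measurable_pi_lambda _ fun i => measurable_pi_lambda _ fun j => ?_
      have hentry : (fun ω => (Real.sqrt (lam / N)
            • (Matrix.of (XS ω) * (Matrix.of (XS ω)).transpose) + W ω) i j)
          = fun ω => Real.sqrt (lam / N) * (∑ l, XS ω i l * XS ω j l) + W ω i j := by
        funext ω
        simp [Matrix.add_apply, Matrix.smul_apply, Matrix.mul_apply,
          Matrix.transpose_apply, Matrix.of_apply, smul_eq_mul]
      rw [hentry]
      exact (measurable_const.mul
        (Finset.measurable_sum _ fun l _ => (hXSm i l).mul (hXSm j l))).add (hWm i j)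
    -- a.e. bound on XS entries
    have hXSbd : ∀ᵐ ω ∂P, ∀ i l, |XS ω i l| ≤ B := by
      rw [ae_all_iff]
      intro i
      rw [ae_all_iff]
      intro l
      have hms : MeasurableSet {x : ℝ | |x| ≤ B} := by
        have hIcc : {x : ℝ | |x| ≤ B} = Set.Icc (-B) B := by ext x; simp [abs_le]
        rw [hIcc]; exact measurableSet_Icc
      exact (ae_map_iff (hXSm i l).aemeasurable hms).mp (by rw [hXSlaw i l]; exact hB)
    -- gibbs measurability
    have g1meas : Measurable fun ω => gibbs N k lam w2 prior (Y ω) (XS ω)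
        (fun X XSv => RovM N k m s X XSv ^ (2 * p)) :=
      gibbs_meas14 N k lam w2 prior hYmeas hXSmeas _ (by fun_prop)
    have g2meas : Measurable fun ω => gibbs N k lam w2 prior (Y ω) (XS ω)
        (fun X XSv => Rov N k m s X XSv ^ (2 * p)) :=
      gibbs_meas14 N k lam w2 prior hYmeas hXSmeas _ (by fun_prop)
    -- per-ω facts
    have hfacts : ∀ᵐ ω ∂P,
        0 ≤ gibbs N k lam w2 prior (Y ω) (XS ω)
            (fun X XSv => RovM N k m s X XSv ^ (2 * p)) ∧
        gibbs N k lam w2 prior (Y ω) (XS ω)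
            (fun X XSv => RovM N k m s X XSv ^ (2 * p))
          ≤ 2 ^ (2 * p) * gibbs N k lam w2 prior (Y ω) (XS ω)
                (fun X XSv => Rov N k m s X XSv ^ (2 * p))
            + 2 ^ (2 * p) * (B ^ (4 * p) / (N : ℝ) ^ (2 * p)) ∧
        0 ≤ gibbs N k lam w2 prior (Y ω) (XS ω)
            (fun X XSv => Rov N k m s X XSv ^ (2 * p)) ∧
        gibbs N k lam w2 prior (Y ω) (XS ω)
            (fun X XSv => Rov N k m s X XSv ^ (2 * p)) ≤ B ^ (4 * p) := by
      filter_upwards [hXSbd] with ω hω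
      exact gibbs_facts14 N k hN1 lam w2 prior B hB0 hB p m s (Y ω) (XS ω) hω
    -- integrability
    have hg2int : Integrable (fun ω => gibbs N k lam w2 prior (Y ω) (XS ω)
        (fun X XSv => Rov N k m s X XSv ^ (2 * p))) P := by
      apply Integrable.mono' (integrable_const (B ^ (4 * p)))
        g2meas.aestronglyMeasurable
      filter_upwards [hfacts] with ω h
      rw [Real.norm_eq_abs, abs_of_nonneg h.2.2.1]
      exact h.2.2.2
    have hg1int : Integrable (fun ω => gibbs N k lam w2 prior (Y ω) (XS ω)
        (fun X XSv => RovM N k m s X XSv ^ (2 * p))) P := by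
      apply Integrable.mono' (integrable_const ((2 : ℝ) ^ (2 * p) * B ^ (4 * p)
        + 2 ^ (2 * p) * (B ^ (4 * p) / (N : ℝ) ^ (2 * p))))
        g1meas.aestronglyMeasurable
      filter_upwards [hfacts] with ω h
      rw [Real.norm_eq_abs, abs_of_nonneg h.1]
      have h1 := h.2.1
      have h2 := h.2.2.2
      have hpow : (0 : ℝ) ≤ 2 ^ (2 * p) := by positivity
      nlinarith [h.2.2.1]
    -- integral comparison
    have hcomp : nuE P N k lam w2 prior Y XS
        (fun X XSv => RovM N k m s X XSv ^ (2 * p))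
        ≤ 2 ^ (2 * p) * nuE P N k lam w2 prior Y XS
            (fun X XSv => Rov N k m s X XSv ^ (2 * p))
          + 2 ^ (2 * p) * (B ^ (4 * p) / (N : ℝ) ^ (2 * p)) := by
      rw [nuE, nuE]
      have hmono := integral_mono_ae hg1int
        ((hg2int.const_mul ((2 : ℝ) ^ (2 * p))).add (integrable_const
          ((2 : ℝ) ^ (2 * p) * (B ^ (4 * p) / (N : ℝ) ^ (2 * p)))))
        (by filter_upwards [hfacts] with ω h; exact h.2.1)
      simp only [Pi.add_apply] at hmono
      rw [integral_add (hg2int.const_mul _) (integrable_const _),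
        integral_const_mul, integral_const, probReal_univ,
        one_smul] at hmono
      exact hmono
    -- final arithmetic
    have hmom_p := hmom p le_rfl m s
    have hpowle : (N : ℝ) ^ p ≤ (N : ℝ) ^ (2 * p) :=
      pow_le_pow_right₀ hNR1 (by omega)
    have hc_le : (2 : ℝ) ^ (2 * p) * (B ^ (4 * p) / (N : ℝ) ^ (2 * p))
        ≤ 2 ^ (2 * p) * (B ^ (4 * p) / (N : ℝ) ^ p) := by
      have hd : B ^ (4 * p) / (N : ℝ) ^ (2 * p) ≤ B ^ (4 * p) / (N : ℝ) ^ p :=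
        div_le_div_of_nonneg_left (pow_nonneg hB0 _) (by positivity) hpowle
      have hP2 : (0 : ℝ) ≤ 2 ^ (2 * p) := by positivity
      exact mul_le_mul_of_nonneg_left hd hP2
    calc nuE P N k lam w2 prior Y XS (fun X XSv => RovM N k m s X XSv ^ (2 * p))
        ≤ 2 ^ (2 * p) * nuE P N k lam w2 prior Y XS
            (fun X XSv => Rov N k m s X XSv ^ (2 * p))
          + 2 ^ (2 * p) * (B ^ (4 * p) / (N : ℝ) ^ (2 * p)) := hcomp
      _ ≤ 2 ^ (2 * p) * (C / (N : ℝ) ^ p)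
          + 2 ^ (2 * p) * (B ^ (4 * p) / (N : ℝ) ^ p) := by
          have hP2 : (0 : ℝ) ≤ 2 ^ (2 * p) := by positivity
          have := mul_le_mul_of_nonneg_left hmom_p hP2
          linarith [hc_le]
      _ = ((2 : ℝ) ^ (2 * p) * C + (2 : ℝ) ^ (2 * p) * B ^ (4 * p)) / (N : ℝ) ^ p := by
          field_simp
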